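/- If γ_h → γ in H (with all paths contained in U), then A(γ_h) converges to A(γ) in the strong operator topology, i.e. A(γ_h)ξ → A(γ)ξ in H_W for every ξ ∈ H_W. -/

import Mathlib

open MeasureTheory Set Filter Topology ContDiff
open scoped RealInnerProductSpace

noncomputable section

/-- Euclidean space `ℝ^n`. -/
abbrev E (n : ℕ) : Type := EuclideanSpace ℝ (Fin n)

/-- Lebesgue measure restricted to the interval `[0,1]`. -/
abbrev μ01 : Measure ℝ := volume.restrict (Set.Icc (0:ℝ) 1)

instance : IsFiniteMeasure μ01 :=
  ⟨by rw [Measure.restrict_apply_univ]; simp [Real.volume_Icc]⟩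

/-- The Hilbert space `H = ℝ^n × L²([0,1],ℝ^n)`, the standard model of `H¹([0,1],ℝ^n)`
via `u ↦ (u 0, u')`. -/
abbrev Hsp (n : ℕ) : Type := E n × Lp (E n) 2 μ01

variable {n : ℕ}

/-- The absolutely continuous path associated to `(x,w) ∈ H`:  `t ↦ x + ∫_0^t w(s) ds`. -/
def pathH (p : Hsp n) : ℝ → E n :=
  fun t => p.1 + ∫ s in Set.Ioc (0:ℝ) t, p.2 s ∂μ01

/-- The open set `𝒪 ⊆ H` of those `(x,w)` whose path stays in `U`. -/
def actO (U : Set (E n)) : Set (Hsp n) :=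
  {p | ∀ t ∈ Set.Icc (0:ℝ) 1, pathH p t ∈ U}

/-- The Lagrangian action functional `S_L`. -/
def action (L : ℝ → E n → E n → ℝ) (p : Hsp n) : ℝ :=
  ∫ t, L t (pathH p t) (p.2 t) ∂μ01

/-- The first differential of the action functional:
`DS_L(p)[ξ] = ∫_0^1 ( ∂L/∂q · ξ + ∂L/∂v · ξ' ) dt`. -/
def dAct (Lq Lv : ℝ → E n → E n → E n) (p ξ : Hsp n) : ℝ :=
  ∫ t, (⟪Lq t (pathH p t) (p.2 t), pathH ξ t⟫ + ⟪Lv t (pathH p t) (p.2 t), ξ.2 t⟫) ∂μ01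

/-- The second Gateaux differential of the action functional:
`d²S_L(p)[ξ,η] = ∫_0^1 ( ∂²L/∂v² ξ'·η' + ∂²L/∂v∂q ξ'·η + ∂²L/∂q∂v ξ·η' + ∂²L/∂q² ξ·η ) dt`. -/
def d2Act (Lvv Lqv Lqq : ℝ → E n → E n → (E n →L[ℝ] E n)) (p ξ η : Hsp n) : ℝ :=
  ∫ t, (⟪Lvv t (pathH p t) (p.2 t) (ξ.2 t), η.2 t⟫
      + ⟪Lqv t (pathH p t) (p.2 t) (pathH ξ t), η.2 t⟫
      + ⟪Lqv t (pathH p t) (p.2 t) (pathH η t), ξ.2 t⟫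
      + ⟪Lqq t (pathH p t) (p.2 t) (pathH ξ t), pathH η t⟫) ∂μ01

/-- The `H`-inner product `⟨(x,w),(y,z)⟩ = x·y + ⟨w,z⟩_{L²}`. -/
def innH (p q : Hsp n) : ℝ := ⟪p.1, q.1⟫ + ⟪p.2, q.2⟫

lemma pathH_add (p q : Hsp n) (t : ℝ) (_ht : t ∈ Set.Icc (0:ℝ) 1) :
    pathH (p + q) t = pathH p t + pathH q t := by
  have hint : ∀ r : Hsp n, Integrable (r.2 : ℝ → E n) (μ01.restrict (Set.Ioc (0:ℝ) t)) :=
    fun r => ((Lp.memLp r.2).integrable (by norm_num)).restrict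
  have h1 : (((p + q).2 : Lp (E n) 2 μ01) : ℝ → E n)
      =ᵐ[μ01.restrict (Set.Ioc (0:ℝ) t)] fun s => p.2 s + q.2 s :=
    ae_restrict_of_ae (Lp.coeFn_add p.2 q.2)
  have h2 : ∫ s in Set.Ioc (0:ℝ) t, (p + q).2 s ∂μ01
      = (∫ s in Set.Ioc (0:ℝ) t, p.2 s ∂μ01) + ∫ s in Set.Ioc (0:ℝ) t, q.2 s ∂μ01 := by
    rw [integral_congr_ae h1]
    exact integral_add (hint p) (hint q)
  simp only [pathH, Prod.fst_add, h2]
  abel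

lemma pathH_smul (c : ℝ) (p : Hsp n) (t : ℝ) (_ht : t ∈ Set.Icc (0:ℝ) 1) :
    pathH (c • p) t = c • pathH p t := by
  have h1 : (((c • p).2 : Lp (E n) 2 μ01) : ℝ → E n)
      =ᵐ[μ01.restrict (Set.Ioc (0:ℝ) t)] fun s => c • (p.2 s) :=
    ae_restrict_of_ae (Lp.coeFn_smul c p.2)
  have h2 : ∫ s in Set.Ioc (0:ℝ) t, (c • p).2 s ∂μ01
      = c • ∫ s in Set.Ioc (0:ℝ) t, p.2 s ∂μ01 := by
    rw [integral_congr_ae h1]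
    exact integral_smul c _
  simp only [pathH, Prod.smul_fst, h2, smul_add]

lemma pathH_zero (t : ℝ) (_ht : t ∈ Set.Icc (0:ℝ) 1) : pathH (0 : Hsp n) t = 0 := by
  have h1 : (((0 : Hsp n).2 : Lp (E n) 2 μ01) : ℝ → E n)
      =ᵐ[μ01.restrict (Set.Ioc (0:ℝ) t)] fun _ => (0 : E n) :=
    ae_restrict_of_ae (Lp.coeFn_zero (E n) 2 μ01)
  simp only [pathH]
  rw [integral_congr_ae h1]
  simp

/-- The closed subspace `H_W = {(x,w) : (γ(0),γ(1)) ∈ W}` of `H`. -/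
def HWsub (W : Submodule ℝ (E n × E n)) : Submodule ℝ (Hsp n) where
  carrier := {p | (pathH p 0, pathH p 1) ∈ W}
  add_mem' := by
    intro p q hp hq
    simp only [Set.mem_setOf_eq] at *
    rw [pathH_add p q 0 (by norm_num), pathH_add p q 1 (by norm_num)]
    exact W.add_mem hp hq
  zero_mem' := by
    simp only [Set.mem_setOf_eq]
    rw [pathH_zero 0 (by norm_num), pathH_zero 1 (by norm_num)]
    exact W.zero_mem
  smul_mem' := by
    intro c p hp
    simp only [Set.mem_setOf_eq] at *
    rw [pathH_smul c p 0 (by norm_num), pathH_smul c p 1 (by norm_num)]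
    exact W.smul_mem c hp

/-- The auxiliary inner product `⟨ξ,η⟩₀ = ∫ ∂²L/∂v²(t,0,0) ξ'·η' dt + ∫ ξ·η dt` on `H_W`. -/
def inn0 (Lvv : ℝ → E n → E n → (E n →L[ℝ] E n)) (ξ η : Hsp n) : ℝ :=
  (∫ t, ⟪Lvv t 0 0 (ξ.2 t), η.2 t⟫ ∂μ01) + ∫ t, ⟪pathH ξ t, pathH η t⟫ ∂μ01

end

/-!
For `η = A(γ_h)ξ - A(γ)ξ` the defining identity of `A` gives
`⟨η, η⟩₀ = ∫ (L_vv(γ_h) - L_vv(γ)) ξ' · η' dt`, and `⟨·,·⟩₀` is coercive on `H` by (L2'), so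
Cauchy–Schwarz bounds `‖η‖` by a constant times `‖(L_vv(γ_h) - L_vv(γ)) ξ'‖_{L²}`.
Along a subsequence `γ_h' → γ'` almost everywhere; as `L_vv` is continuous (it is a second partial
derivative of the smooth `L`) and bounded by `ℓ₁`, dominated convergence sends this `L²` norm to
zero. Since every subsequence has such a further subsequence, the whole sequence converges.
-/

section PartialDerivative

variable {𝕜 T Q V F : Type*} [NontriviallyNormedField 𝕜]
  [NormedAddCommGroup T] [NormedSpace 𝕜 T] [NormedAddCommGroup Q] [NormedSpace 𝕜 Q]
  [NormedAddCommGroup V] [NormedSpace 𝕜 V] [NormedAddCommGroup F] [NormedSpace 𝕜 F]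

theorem ContDiffOn.of_hasFDerivAt_partial_last {k : WithTop ℕ∞} {s : Set (T × Q × V)}
    {G : T × Q × V → F} {D : T × Q × V → V →L[𝕜] F} (hs : IsOpen s)
    (hG : ContDiffOn 𝕜 (k + 1) G s)
    (hD : ∀ z ∈ s, HasFDerivAt (fun v => G (z.1, z.2.1, v)) (D z) z.2.2) :
    ContDiffOn 𝕜 k D s := by
  set ι := (ContinuousLinearMap.inr 𝕜 T (Q × V)).comp (ContinuousLinearMap.inr 𝕜 Q V)
  have hslice : ∀ z : T × Q × V, HasFDerivAt (fun v => (z.1, z.2.1, v)) ι z.2.2 :=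
    fun z => (hasFDerivAt_prodMk_right z.1 _).comp _ (hasFDerivAt_prodMk_right z.2.1 _)
  refine ((hG.fderiv_of_isOpen hs le_rfl).clm_comp (contDiffOn_const (c := ι))).congr
    fun z hz => ?_
  have hGz : DifferentiableAt 𝕜 G z :=
    (hG.differentiableOn (by simp)).differentiableAt (hs.mem_nhds hz)
  exact (hD z hz).unique (hGz.hasFDerivAt.comp _ (hslice z))

end PartialDerivative

theorem ContinuousOn.aestronglyMeasurable_comp_of_ae_mem {α β γ : Type*} [MeasurableSpace α]
    {μ : Measure α} [TopologicalSpace β] [MeasurableSpace β] [BorelSpace β]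
    [SecondCountableTopology β] [TopologicalSpace γ]
    [TopologicalSpace.PseudoMetrizableSpace γ] {g : β → γ} {s : Set β} {f : α → β}
    (hg : ContinuousOn g s) (hs : MeasurableSet s) (hf : AEMeasurable f μ)
    (hfs : ∀ᵐ a ∂μ, f a ∈ s) : AEStronglyMeasurable (fun a => g (f a)) μ := by
  have hmap : (μ.map f).restrict s = μ.map f :=
    Measure.restrict_eq_self_of_ae_mem ((ae_map_iff hf hs).mpr hfs)
  exact (hmap ▸ hg.aestronglyMeasurable hs).comp_aemeasurable hf

namespace MeasureTheory

variable {α : Type*} [MeasurableSpace α] {μ : Measure α}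

theorem MemLp.clm_apply_of_ae_norm_le {V F : Type*} [NormedAddCommGroup V] [NormedSpace ℝ V]
    [NormedAddCommGroup F] [NormedSpace ℝ F] {p : ENNReal} {M : α → V →L[ℝ] F} {C : ℝ}
    (hM : AEStronglyMeasurable M μ) (hMC : ∀ᵐ a ∂μ, ‖M a‖ ≤ C) {f : α → V}
    (hf : MemLp f p μ) : MemLp (fun a => M a (f a)) p μ :=
  hf.of_le_mul (isBoundedBilinearMap_apply.continuous.comp_aestronglyMeasurable
    (hM.prodMk hf.aestronglyMeasurable)) <| by
      filter_upwards [hMC] with a ha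
      exact (M a).le_of_opNorm_le ha _

section InnerProduct

variable {F : Type*} [NormedAddCommGroup F] [InnerProductSpace ℝ F]

theorem MemLp.integrable_inner {f g : α → F} (hf : MemLp f 2 μ) (hg : MemLp g 2 μ) :
    Integrable (fun a => ⟪f a, g a⟫) μ :=
  (L2.integrable_inner (hf.toLp f) (hg.toLp g)).congr <| by
    filter_upwards [hf.coeFn_toLp, hg.coeFn_toLp] with a hfa hga
    rw [hfa, hga]

theorem Lp.integral_norm_sq_eq (f : Lp F 2 μ) : ∫ a, ‖f a‖ ^ 2 ∂μ = ‖f‖ ^ 2 := by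
  simp_rw [← real_inner_self_eq_norm_sq, ← L2.inner_def]

theorem MemLp.integral_inner_le {f : α → F} (hf : MemLp f 2 μ) (w : Lp F 2 μ) :
    ∫ a, ⟪f a, w a⟫ ∂μ ≤ √(∫ a, ‖f a‖ ^ 2 ∂μ) * ‖w‖ := by
  have hint : ∫ a, ⟪f a, w a⟫ ∂μ = ⟪hf.toLp f, w⟫ :=
    integral_congr_ae <| by
      filter_upwards [hf.coeFn_toLp] with a ha
      rw [ha]
  have hnorm : √(∫ a, ‖f a‖ ^ 2 ∂μ) = ‖hf.toLp f‖ := by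
    rw [← Real.sqrt_sq (norm_nonneg (hf.toLp f)), ← Lp.integral_norm_sq_eq]
    congr 1
    exact integral_congr_ae <| by
      filter_upwards [hf.coeFn_toLp] with a ha
      rw [ha]
  rw [hint, hnorm]
  exact real_inner_le_norm _ _

theorem Lp.mul_norm_sq_le_integral_inner_apply {M : α → F →L[ℝ] F} {ℓ : ℝ} (w : Lp F 2 μ)
    (hM : ∀ᵐ a ∂μ, ∀ ξ, ℓ * ‖ξ‖ ^ 2 ≤ ⟪M a ξ, ξ⟫)
    (hint : Integrable (fun a => ⟪M a (w a), w a⟫) μ) :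
    ℓ * ‖w‖ ^ 2 ≤ ∫ a, ⟪M a (w a), w a⟫ ∂μ := by
  rw [← Lp.integral_norm_sq_eq, ← integral_const_mul]
  refine integral_mono_ae (((L2.integrable_inner (𝕜 := ℝ) w w).congr ?_).const_mul ℓ) hint ?_
  · exact Eventually.of_forall fun a => real_inner_self_eq_norm_sq _
  · filter_upwards [hM] with a ha
    exact ha _

end InnerProduct

theorem tendsto_sqrt_integral_norm_sq_of_dominated {V : Type*} [NormedAddCommGroup V]
    {G : ℕ → α → V} {b : α → ℝ}
    (hG : ∀ k, AEStronglyMeasurable (G k) μ) (hb : MemLp b 2 μ)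
    (hGb : ∀ k, ∀ᵐ a ∂μ, ‖G k a‖ ≤ b a)
    (hlim : ∀ᵐ a ∂μ, Tendsto (fun k => G k a) atTop (𝓝 0)) :
    Tendsto (fun k => √(∫ a, ‖G k a‖ ^ 2 ∂μ)) atTop (𝓝 0) := by
  have hint : Tendsto (fun k => ∫ a, ‖G k a‖ ^ 2 ∂μ) atTop (𝓝 (∫ _, (0 : ℝ) ∂μ)) := by
    refine tendsto_integral_of_dominated_convergence (fun a => b a ^ 2)
      (fun k => (hG k).norm.pow 2) hb.integrable_sq (fun k => ?_) ?_
    · filter_upwards [hGb k] with a ha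
      rw [Real.norm_of_nonneg (by positivity)]
      exact pow_le_pow_left₀ (norm_nonneg _) ha 2
    · filter_upwards [hlim] with a ha
      simpa using (ha.norm.pow 2)
  have hsqrt := (Real.continuous_sqrt.tendsto _).comp hint
  rwa [integral_zero, Real.sqrt_zero] at hsqrt

theorem Lp.integral_norm_le_norm {V : Type*} [NormedAddCommGroup V] [IsProbabilityMeasure μ]
    (f : Lp V 2 μ) : ∫ a, ‖f a‖ ∂μ ≤ ‖f‖ := by
  rw [integral_norm_eq_lintegral_enorm (Lp.aestronglyMeasurable f),
    ← eLpNorm_one_eq_lintegral_enorm, Lp.norm_def]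
  exact ENNReal.toReal_mono (Lp.eLpNorm_ne_top f)
    (eLpNorm_le_eLpNorm_of_exponent_le (by norm_num) (Lp.aestronglyMeasurable f))

end MeasureTheory

instance : IsProbabilityMeasure μ01 :=
  ⟨by rw [Measure.restrict_apply_univ]; simp [Real.volume_Icc]⟩

section Paths

variable {n : ℕ}

theorem continuousOn_Lvv {U : Set (E n)} (hU : IsOpen U) {L : ℝ → E n → E n → ℝ}
    {Lv : ℝ → E n → E n → E n} {Lvv : ℝ → E n → E n → (E n →L[ℝ] E n)}
    (hL : ContDiffOn ℝ ∞ (fun z : ℝ × E n × E n => L z.1 z.2.1 z.2.2)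
      (Set.univ ×ˢ U ×ˢ Set.univ))
    (hLv : ∀ (t : ℝ), ∀ q ∈ U, ∀ v : E n, HasGradientAt (fun v' => L t q v') (Lv t q v) v)
    (hLvv : ∀ (t : ℝ), ∀ q ∈ U, ∀ v : E n, HasFDerivAt (fun v' => Lv t q v') (Lvv t q v) v) :
    ContinuousOn (fun z : ℝ × E n × E n => Lvv z.1 z.2.1 z.2.2) (univ ×ˢ U ×ˢ univ) := by
  have hs : IsOpen (univ ×ˢ U ×ˢ univ : Set (ℝ × E n × E n)) :=
    isOpen_univ.prod (hU.prod isOpen_univ)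
  have hdual : ContDiffOn ℝ 1
      (fun z : ℝ × E n × E n => InnerProductSpace.toDual ℝ (E n) (Lv z.1 z.2.1 z.2.2))
      (univ ×ˢ U ×ˢ univ) :=
    (hL.of_le (WithTop.coe_le_coe.2 le_top)).of_hasFDerivAt_partial_last hs
      fun z hz => hLv _ _ hz.2.1 _
  have hgrad : ContDiffOn ℝ 1 (fun z : ℝ × E n × E n => Lv z.1 z.2.1 z.2.2)
      (univ ×ˢ U ×ˢ univ) :=
    ((InnerProductSpace.toDual ℝ (E n)).symm.contDiff.comp_contDiffOn hdual).congr
      fun z _ => by simp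
  exact (hgrad.of_hasFDerivAt_partial_last (k := 0) hs
    fun z hz => hLvv _ _ hz.2.1 _).continuousOn

theorem pathH_sub (p q : Hsp n) {t : ℝ} (ht : t ∈ Icc (0 : ℝ) 1) :
    pathH (p - q) t = pathH p t - pathH q t := by
  rw [sub_eq_add_neg, ← neg_one_smul ℝ q, pathH_add _ _ t ht, pathH_smul _ _ t ht, neg_one_smul,
    ← sub_eq_add_neg]

theorem norm_setIntegral_Ioc_le (w : Lp (E n) 2 μ01) (t : ℝ) :
    ‖∫ s in Ioc (0 : ℝ) t, w s ∂μ01‖ ≤ ‖w‖ :=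
  calc ‖∫ s in Ioc (0 : ℝ) t, w s ∂μ01‖ ≤ ∫ s in Ioc (0 : ℝ) t, ‖w s‖ ∂μ01 :=
        norm_integral_le_integral_norm _
    _ ≤ ∫ s, ‖w s‖ ∂μ01 :=
        setIntegral_le_integral ((Lp.memLp w).integrable one_le_two).norm
          (Eventually.of_forall fun _ => norm_nonneg _)
    _ ≤ ‖w‖ := Lp.integral_norm_le_norm w

theorem norm_pathH_le (p : Hsp n) (t : ℝ) : ‖pathH p t‖ ≤ ‖p.1‖ + ‖p.2‖ :=
  (norm_add_le _ _).trans (add_le_add le_rfl (norm_setIntegral_Ioc_le p.2 t))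

theorem norm_fst_le_norm_pathH_add (p : Hsp n) (t : ℝ) : ‖p.1‖ ≤ ‖pathH p t‖ + ‖p.2‖ := by
  have hp : p.1 = pathH p t - ∫ s in Ioc (0 : ℝ) t, p.2 s ∂μ01 := by simp [pathH]
  rw [hp]
  exact (norm_sub_le _ _).trans (add_le_add le_rfl (norm_setIntegral_Ioc_le p.2 t))

theorem lipschitzWith_pathH_apply {t : ℝ} (ht : t ∈ Icc (0 : ℝ) 1) :
    LipschitzWith 2 (fun p : Hsp n => pathH p t) :=
  LipschitzWith.of_dist_le_mul fun p q => by
    rw [dist_eq_norm, dist_eq_norm, ← pathH_sub p q ht]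
    calc ‖pathH (p - q) t‖ ≤ ‖(p - q).1‖ + ‖(p - q).2‖ := norm_pathH_le _ t
      _ ≤ ‖p - q‖ + ‖p - q‖ := add_le_add (norm_fst_le _) (norm_snd_le _)
      _ = (2 : NNReal) * ‖p - q‖ := by push_cast; ring

theorem continuousOn_pathH (p : Hsp n) : ContinuousOn (pathH p) (Icc 0 1) :=
  continuousOn_const.add (intervalIntegral.continuousOn_primitive
    ((Lp.memLp p.2).integrable one_le_two).integrableOn)

theorem integrable_inner_pathH (p q : Hsp n) :
    Integrable (fun t => ⟪pathH p t, pathH q t⟫) μ01 :=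
  ((continuousOn_pathH p).inner (continuousOn_pathH q)).integrableOn_Icc

theorem sq_norm_le_integral_pathH_add (p : Hsp n) :
    ‖p‖ ^ 2 ≤ 2 * ∫ t, ‖pathH p t‖ ^ 2 ∂μ01 + 3 * ‖p.2‖ ^ 2 := by
  have hfst : ∀ t, ‖p.1‖ ^ 2 ≤ 2 * ‖pathH p t‖ ^ 2 + 2 * ‖p.2‖ ^ 2 := fun t => by
    nlinarith [norm_fst_le_norm_pathH_add p t, norm_nonneg p.1,
      sq_nonneg (‖pathH p t‖ - ‖p.2‖)]
  have hpath : Integrable (fun t => ‖pathH p t‖ ^ 2) μ01 :=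
    ((continuousOn_pathH p).norm.pow 2).integrableOn_Icc
  have hint : Integrable (fun t => 2 * ‖pathH p t‖ ^ 2 + 2 * ‖p.2‖ ^ 2) μ01 :=
    (hpath.const_mul 2).add (integrable_const _)
  have hfst_int : ‖p.1‖ ^ 2 ≤ 2 * ∫ t, ‖pathH p t‖ ^ 2 ∂μ01 + 2 * ‖p.2‖ ^ 2 := by
    calc ‖p.1‖ ^ 2 = ∫ _, ‖p.1‖ ^ 2 ∂μ01 := by simp
      _ ≤ ∫ t, 2 * ‖pathH p t‖ ^ 2 + 2 * ‖p.2‖ ^ 2 ∂μ01 :=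
          integral_mono (integrable_const _) hint hfst
      _ = 2 * ∫ t, ‖pathH p t‖ ^ 2 ∂μ01 + 2 * ‖p.2‖ ^ 2 := by
          rw [integral_add (hpath.const_mul 2) (integrable_const _), integral_const_mul]
          simp
  have hprod : ‖p‖ ^ 2 ≤ ‖p.1‖ ^ 2 + ‖p.2‖ ^ 2 := by
    rw [Prod.norm_def]
    rcases max_cases ‖p.1‖ ‖p.2‖ with ⟨h, _⟩ | ⟨h, _⟩ <;> rw [h] <;>
      linarith [sq_nonneg ‖p.1‖, sq_nonneg ‖p.2‖]
  linarith

noncomputable def hessAlong (Lvv : ℝ → E n → E n → (E n →L[ℝ] E n)) (p : Hsp n) (t : ℝ) :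
    E n →L[ℝ] E n :=
  Lvv t (pathH p t) (p.2 t)

section Hessian

variable {U : Set (E n)} {Lvv : ℝ → E n → E n → (E n →L[ℝ] E n)}

theorem aestronglyMeasurable_Lvv_comp {f : ℝ → ℝ × E n × E n} (hU : IsOpen U)
    (hcont : ContinuousOn (fun z : ℝ × E n × E n => Lvv z.1 z.2.1 z.2.2) (univ ×ˢ U ×ˢ univ))
    (hf : AEMeasurable f μ01) (hfU : ∀ᵐ t ∂μ01, (f t).2.1 ∈ U) :
    AEStronglyMeasurable (fun t => Lvv (f t).1 (f t).2.1 (f t).2.2) μ01 :=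
  hcont.aestronglyMeasurable_comp_of_ae_mem
    (MeasurableSet.univ.prod (hU.measurableSet.prod .univ)) hf
    (hfU.mono fun _ ht => ⟨trivial, ht, trivial⟩)

theorem aestronglyMeasurable_hessAlong (hU : IsOpen U)
    (hcont : ContinuousOn (fun z : ℝ × E n × E n => Lvv z.1 z.2.1 z.2.2) (univ ×ˢ U ×ˢ univ))
    {p : Hsp n} (hp : p ∈ actO U) : AEStronglyMeasurable (hessAlong Lvv p) μ01 :=
  aestronglyMeasurable_Lvv_comp (f := fun t => (t, pathH p t, p.2 t)) hU hcont
    (aemeasurable_id.prodMk (((continuousOn_pathH p).aemeasurable measurableSet_Icc).prodMk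
      (Lp.aestronglyMeasurable p.2).aemeasurable))
    (ae_restrict_of_forall_mem measurableSet_Icc hp)

theorem ae_norm_hessAlong_le {ℓ₁ : ℝ}
    (hbound : ∀ t ∈ Icc (0 : ℝ) 1, ∀ q ∈ U, ∀ v : E n, ‖Lvv t q v‖ ≤ ℓ₁)
    {p : Hsp n} (hp : p ∈ actO U) : ∀ᵐ t ∂μ01, ‖hessAlong Lvv p t‖ ≤ ℓ₁ :=
  ae_restrict_of_forall_mem measurableSet_Icc fun t ht => hbound t ht _ (hp t ht) _

theorem ae_tendsto_hessAlong (hU : IsOpen U)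
    (hcont : ContinuousOn (fun z : ℝ × E n × E n => Lvv z.1 z.2.1 z.2.2) (univ ×ˢ U ×ˢ univ))
    {σ : ℕ → Hsp n} {γ : Hsp n} (hγ : γ ∈ actO U) (hσ : Tendsto σ atTop (𝓝 γ))
    (hσ' : ∀ᵐ t ∂μ01, Tendsto (fun k => (σ k).2 t) atTop (𝓝 (γ.2 t))) :
    ∀ᵐ t ∂μ01, Tendsto (fun k => hessAlong Lvv (σ k) t) atTop (𝓝 (hessAlong Lvv γ t)) := by
  filter_upwards [hσ', ae_restrict_mem measurableSet_Icc] with t hσ't ht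
  have hpath : Tendsto (fun k => pathH (σ k) t) atTop (𝓝 (pathH γ t)) :=
    ((lipschitzWith_pathH_apply ht).continuous.tendsto γ).comp hσ
  exact (hcont.continuousAt ((isOpen_univ.prod (hU.prod isOpen_univ)).mem_nhds
    ⟨trivial, hγ t ht, trivial⟩)).tendsto.comp
    (tendsto_const_nhds.prodMk_nhds (hpath.prodMk_nhds hσ't))

end Hessian

section InnerZero

variable {Lvv : ℝ → E n → E n → (E n →L[ℝ] E n)} {C : ℝ}

theorem integrable_inner_Lvv_zero_apply
    (hM : AEStronglyMeasurable (fun t => Lvv t 0 0) μ01) (hMC : ∀ᵐ t ∂μ01, ‖Lvv t 0 0‖ ≤ C)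
    (w w' : Lp (E n) 2 μ01) : Integrable (fun t => ⟪Lvv t 0 0 (w t), w' t⟫) μ01 :=
  ((Lp.memLp w).clm_apply_of_ae_norm_le hM hMC).integrable_inner (Lp.memLp w')

theorem inn0_sub_left (hM : AEStronglyMeasurable (fun t => Lvv t 0 0) μ01)
    (hMC : ∀ᵐ t ∂μ01, ‖Lvv t 0 0‖ ≤ C) (p q r : Hsp n) :
    inn0 Lvv (p - q) r = inn0 Lvv p r - inn0 Lvv q r := by
  have hderiv : ∫ t, ⟪Lvv t 0 0 ((p - q).2 t), r.2 t⟫ ∂μ01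
      = ∫ t, ⟪Lvv t 0 0 (p.2 t), r.2 t⟫ ∂μ01 - ∫ t, ⟪Lvv t 0 0 (q.2 t), r.2 t⟫ ∂μ01 := by
    rw [← integral_sub (integrable_inner_Lvv_zero_apply hM hMC _ _)
      (integrable_inner_Lvv_zero_apply hM hMC _ _)]
    refine integral_congr_ae ?_
    filter_upwards [Lp.coeFn_sub p.2 q.2] with t ht
    rw [Prod.snd_sub, ht, Pi.sub_apply, map_sub, inner_sub_left]
  have hpath : ∫ t, ⟪pathH (p - q) t, pathH r t⟫ ∂μ01
      = ∫ t, ⟪pathH p t, pathH r t⟫ ∂μ01 - ∫ t, ⟪pathH q t, pathH r t⟫ ∂μ01 := by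
    rw [← integral_sub (integrable_inner_pathH p r) (integrable_inner_pathH q r)]
    refine integral_congr_ae ?_
    filter_upwards [ae_restrict_mem measurableSet_Icc] with t ht
    rw [pathH_sub p q ht, inner_sub_left]
  rw [inn0, inn0, inn0, hderiv, hpath]
  ring

theorem sq_norm_le_mul_inn0 {ℓ₂ : ℝ} (hℓ₂ : 0 < ℓ₂)
    (hcoer : ∀ t ∈ Icc (0 : ℝ) 1, ∀ ξ : E n, ℓ₂ * ‖ξ‖ ^ 2 ≤ ⟪Lvv t 0 0 ξ, ξ⟫)
    (hM : AEStronglyMeasurable (fun t => Lvv t 0 0) μ01) (hMC : ∀ᵐ t ∂μ01, ‖Lvv t 0 0‖ ≤ C)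
    (p : Hsp n) : ‖p‖ ^ 2 ≤ (2 + 3 / ℓ₂) * inn0 Lvv p p := by
  have hderiv : ℓ₂ * ‖p.2‖ ^ 2 ≤ ∫ t, ⟪Lvv t 0 0 (p.2 t), p.2 t⟫ ∂μ01 :=
    Lp.mul_norm_sq_le_integral_inner_apply p.2 (ae_restrict_of_forall_mem measurableSet_Icc hcoer)
      (integrable_inner_Lvv_zero_apply hM hMC _ _)
  have hpath : ∫ t, ⟪pathH p t, pathH p t⟫ ∂μ01 = ∫ t, ‖pathH p t‖ ^ 2 ∂μ01 := by
    simp_rw [real_inner_self_eq_norm_sq]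
  have hpath_nonneg : 0 ≤ ∫ t, ‖pathH p t‖ ^ 2 ∂μ01 := integral_nonneg fun _ => by positivity
  have h3 : 3 * ‖p.2‖ ^ 2 ≤ 3 / ℓ₂ * ∫ t, ⟪Lvv t 0 0 (p.2 t), p.2 t⟫ ∂μ01 := by
    rw [div_mul_eq_mul_div, le_div_iff₀ hℓ₂]
    linarith
  have hderiv_nonneg : 0 ≤ ∫ t, ⟪Lvv t 0 0 (p.2 t), p.2 t⟫ ∂μ01 :=
    le_trans (by positivity) hderiv
  rw [inn0, hpath]
  nlinarith [sq_norm_le_integral_pathH_add p, div_pos three_pos hℓ₂]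

end InnerZero

section Convergence

variable {U : Set (E n)} {Lvv : ℝ → E n → E n → (E n →L[ℝ] E n)} {ℓ₁ ℓ₂ : ℝ}
  {W : Submodule ℝ (E n × E n)} {A : Hsp n → (↥(HWsub W) →L[ℝ] ↥(HWsub W))}

theorem norm_A_apply_sub_le (hU : IsOpen U)
    (hcont : ContinuousOn (fun z : ℝ × E n × E n => Lvv z.1 z.2.1 z.2.2) (univ ×ˢ U ×ˢ univ))
    (hbound : ∀ t ∈ Icc (0 : ℝ) 1, ∀ q ∈ U, ∀ v : E n, ‖Lvv t q v‖ ≤ ℓ₁) (hℓ₂ : 0 < ℓ₂)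
    (hcoer : ∀ t ∈ Icc (0 : ℝ) 1, ∀ ξ : E n, ℓ₂ * ‖ξ‖ ^ 2 ≤ ⟪Lvv t 0 0 ξ, ξ⟫)
    (h0U : (0 : E n) ∈ U)
    (hA : ∀ γ ∈ actO U, ∀ ξ η : ↥(HWsub W),
      inn0 Lvv (A γ ξ : Hsp n) (η : Hsp n)
        = (∫ t, ⟪Lvv t (pathH γ t) (γ.2 t) ((ξ : Hsp n).2 t), (η : Hsp n).2 t⟫ ∂μ01)
          + ∫ t, ⟪pathH (ξ : Hsp n) t, pathH (η : Hsp n) t⟫ ∂μ01)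
    {p γ : Hsp n} (hp : p ∈ actO U) (hγ : γ ∈ actO U) (ξ : ↥(HWsub W)) :
    ‖(A p ξ : Hsp n) - A γ ξ‖ ≤ (2 + 3 / ℓ₂) *
      √(∫ t, ‖(hessAlong Lvv p t - hessAlong Lvv γ t) ((ξ : Hsp n).2 t)‖ ^ 2 ∂μ01) := by
  set η : ↥(HWsub W) := A p ξ - A γ ξ
  set ε := √(∫ t, ‖(hessAlong Lvv p t - hessAlong Lvv γ t) ((ξ : Hsp n).2 t)‖ ^ 2 ∂μ01)
  have hM : AEStronglyMeasurable (fun t => Lvv t 0 0) μ01 :=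
    aestronglyMeasurable_Lvv_comp (f := fun t => (t, 0, 0)) hU hcont (by fun_prop)
      (Eventually.of_forall fun _ => h0U)
  have hMC : ∀ᵐ t ∂μ01, ‖Lvv t 0 0‖ ≤ ℓ₁ :=
    ae_restrict_of_forall_mem measurableSet_Icc fun t ht => hbound t ht 0 h0U 0
  have hmem : ∀ q ∈ actO U, MemLp (fun t => hessAlong Lvv q t ((ξ : Hsp n).2 t)) 2 μ01 :=
    fun q hq => (Lp.memLp _).clm_apply_of_ae_norm_le (aestronglyMeasurable_hessAlong hU hcont hq)
      (ae_norm_hessAlong_le hbound hq)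
  have hinn : inn0 Lvv (η : Hsp n) η = ∫ t,
      ⟪(hessAlong Lvv p t - hessAlong Lvv γ t) ((ξ : Hsp n).2 t), (η : Hsp n).2 t⟫ ∂μ01 := by
    simp_rw [sub_apply, inner_sub_left]
    rw [integral_sub ((hmem p hp).integrable_inner (Lp.memLp _))
      ((hmem γ hγ).integrable_inner (Lp.memLp _))]
    rw [show inn0 Lvv (η : Hsp n) η = inn0 Lvv (A p ξ) η - inn0 Lvv (A γ ξ) η from
      inn0_sub_left hM hMC _ _ _, hA p hp, hA γ hγ]
    simp only [hessAlong]
    ring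
  have hCS : inn0 Lvv (η : Hsp n) η ≤ ε * ‖(η : Hsp n)‖ := by
    rw [hinn]
    refine ((hmem p hp).sub (hmem γ hγ) |>.integral_inner_le _).trans ?_
    exact mul_le_mul_of_nonneg_left (norm_snd_le _) (Real.sqrt_nonneg _)
  have hcoer_η := sq_norm_le_mul_inn0 hℓ₂ hcoer hM hMC (η : Hsp n)
  have hsq : ‖(η : Hsp n)‖ ^ 2 ≤ ((2 + 3 / ℓ₂) * ε) * ‖(η : Hsp n)‖ := by
    rw [mul_assoc]
    exact hcoer_η.trans (mul_le_mul_of_nonneg_left hCS (by positivity))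
  have hC : 0 ≤ (2 + 3 / ℓ₂) * ε := by positivity
  change ‖(η : Hsp n)‖ ≤ (2 + 3 / ℓ₂) * ε
  nlinarith [norm_nonneg (η : Hsp n)]

theorem tendsto_A_apply_of_ae_tendsto (hU : IsOpen U)
    (hcont : ContinuousOn (fun z : ℝ × E n × E n => Lvv z.1 z.2.1 z.2.2) (univ ×ˢ U ×ˢ univ))
    (hbound : ∀ t ∈ Icc (0 : ℝ) 1, ∀ q ∈ U, ∀ v : E n, ‖Lvv t q v‖ ≤ ℓ₁) (hℓ₂ : 0 < ℓ₂)
    (hcoer : ∀ t ∈ Icc (0 : ℝ) 1, ∀ ξ : E n, ℓ₂ * ‖ξ‖ ^ 2 ≤ ⟪Lvv t 0 0 ξ, ξ⟫)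
    (h0U : (0 : E n) ∈ U)
    (hA : ∀ γ ∈ actO U, ∀ ξ η : ↥(HWsub W),
      inn0 Lvv (A γ ξ : Hsp n) (η : Hsp n)
        = (∫ t, ⟪Lvv t (pathH γ t) (γ.2 t) ((ξ : Hsp n).2 t), (η : Hsp n).2 t⟫ ∂μ01)
          + ∫ t, ⟪pathH (ξ : Hsp n) t, pathH (η : Hsp n) t⟫ ∂μ01)
    {σ : ℕ → Hsp n} {γ : Hsp n} (hσU : ∀ k, σ k ∈ actO U) (hγ : γ ∈ actO U)
    (hσ : Tendsto σ atTop (𝓝 γ))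
    (hσ' : ∀ᵐ t ∂μ01, Tendsto (fun k => (σ k).2 t) atTop (𝓝 (γ.2 t))) (ξ : ↥(HWsub W)) :
    Tendsto (fun k => A (σ k) ξ) atTop (𝓝 (A γ ξ)) := by
  have hdiff : Tendsto (fun k => √(∫ t,
      ‖(hessAlong Lvv (σ k) t - hessAlong Lvv γ t) ((ξ : Hsp n).2 t)‖ ^ 2 ∂μ01)) atTop (𝓝 0) := by
    refine tendsto_sqrt_integral_norm_sq_of_dominated (b := fun t => (ℓ₁ + ℓ₁) * ‖(ξ : Hsp n).2 t‖)
      (fun k => ?_) ((Lp.memLp _).norm.const_mul _) (fun k => ?_) ?_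
    · exact isBoundedBilinearMap_apply.continuous.comp_aestronglyMeasurable
        (((aestronglyMeasurable_hessAlong hU hcont (hσU k)).sub
          (aestronglyMeasurable_hessAlong hU hcont hγ)).prodMk (Lp.aestronglyMeasurable _))
    · filter_upwards [ae_norm_hessAlong_le hbound (hσU k), ae_norm_hessAlong_le hbound hγ]
        with t hσt hγt
      exact ContinuousLinearMap.le_of_opNorm_le _ ((norm_sub_le _ _).trans (add_le_add hσt hγt)) _
    · filter_upwards [ae_tendsto_hessAlong hU hcont hγ hσ hσ'] with t ht
      simpa [Function.comp_def] using
        ((ContinuousLinearMap.apply ℝ (E n) ((ξ : Hsp n).2 t)).continuous.tendsto _).comp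
          (ht.sub_const (hessAlong Lvv γ t))
  rw [tendsto_subtype_rng, tendsto_iff_norm_sub_tendsto_zero]
  refine squeeze_zero (fun _ => norm_nonneg _)
    (fun k => norm_A_apply_sub_le hU hcont hbound hℓ₂ hcoer h0U hA (hσU k) hγ ξ) ?_
  simpa using hdiff.const_mul (2 + 3 / ℓ₂)

end Convergence

end Paths

theorem A_strong_convergence_general
    {n : ℕ} (U : Set (E n)) (hU : IsOpen U)
    (L : ℝ → E n → E n → ℝ)
    (Lv : ℝ → E n → E n → E n)
    (Lvv Lqv Lvq Lqq : ℝ → E n → E n → (E n →L[ℝ] E n))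
    (hL : ContDiffOn ℝ ∞ (fun z : ℝ × E n × E n => L z.1 z.2.1 z.2.2)
      (Set.univ ×ˢ U ×ˢ Set.univ))
    (hLv : ∀ (t : ℝ), ∀ q ∈ U, ∀ v : E n, HasGradientAt (fun v' => L t q v') (Lv t q v) v)
    (hLvv : ∀ (t : ℝ), ∀ q ∈ U, ∀ v : E n, HasFDerivAt (fun v' => Lv t q v') (Lvv t q v) v)
    (ℓ₁ : ℝ)
    (hL1 : ∀ t ∈ Set.Icc (0:ℝ) 1, ∀ q ∈ U, ∀ v : E n,
      ‖Lvv t q v‖ ≤ ℓ₁ ∧ ‖Lqv t q v‖ ≤ ℓ₁ * (1 + ‖v‖) ∧ ‖Lvq t q v‖ ≤ ℓ₁ * (1 + ‖v‖)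
        ∧ ‖Lqq t q v‖ ≤ ℓ₁ * (1 + ‖v‖ ^ 2))
    (ℓ₂ : ℝ) (hℓ₂ : 0 < ℓ₂)
    (hL2 : ∀ t ∈ Set.Icc (0:ℝ) 1, ∀ q ∈ U, ∀ v ξ : E n, ℓ₂ * ‖ξ‖ ^ 2 ≤ ⟪Lvv t q v ξ, ξ⟫)
    (W : Submodule ℝ (E n × E n)) (h0U : (0 : E n) ∈ U)
    (A : Hsp n → (↥(HWsub W) →L[ℝ] ↥(HWsub W)))
    (hA : ∀ γ ∈ actO U, ∀ ξ η : ↥(HWsub W),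
      inn0 Lvv (A γ ξ : Hsp n) (η : Hsp n)
        = (∫ t, ⟪Lvv t (pathH γ t) (γ.2 t) ((ξ : Hsp n).2 t), (η : Hsp n).2 t⟫ ∂μ01)
          + ∫ t, ⟪pathH (ξ : Hsp n) t, pathH (η : Hsp n) t⟫ ∂μ01)
    (γs : ℕ → Hsp n) (γ : Hsp n)
    (hγs : ∀ h, γs h ∈ actO U) (hγ : γ ∈ actO U)
    (hconv : Tendsto γs atTop (𝓝 γ)) :
    ∀ ξ : ↥(HWsub W), Tendsto (fun h => A (γs h) ξ) atTop (𝓝 (A γ ξ)) := by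
  intro ξ
  have hcont := continuousOn_Lvv hU hL hLv hLvv
  have hbound := fun t ht q hq v => (hL1 t ht q hq v).1
  have hcoer := fun t ht ξ => hL2 t ht 0 h0U 0 ξ
  -- a.e. convergence of the derivatives is only available along subsequences
  refine tendsto_of_subseq_tendsto fun ns hns => ?_
  have hsub : Tendsto (fun k => γs (ns k)) atTop (𝓝 γ) := hconv.comp hns
  obtain ⟨ms, hms, hae⟩ := (tendstoInMeasure_of_tendsto_Lp
    ((continuous_snd.tendsto γ).comp hsub)).exists_seq_tendsto_ae
  exact ⟨ms, tendsto_A_apply_of_ae_tendsto hU hcont hbound hℓ₂ hcoer h0U hA (fun k => hγs _) hγ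
    (hsub.comp hms.tendsto_atTop) hae ξ⟩

/-- If `γ_h → γ` in `H` (paths in `U`), then `A(γ_h) → A(γ)` in the strong
operator topology on `H_W`. -/
theorem A_strong_convergence
    {n : ℕ} (U : Set (E n)) (hU : IsOpen U)
    (L : ℝ → E n → E n → ℝ)
    (Lq Lv : ℝ → E n → E n → E n)
    (Lvv Lqv Lvq Lqq : ℝ → E n → E n → (E n →L[ℝ] E n))
    (hL : ContDiffOn ℝ ∞ (fun z : ℝ × E n × E n => L z.1 z.2.1 z.2.2)
      (Set.univ ×ˢ U ×ˢ Set.univ))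
    (hLq : ∀ (t : ℝ), ∀ q ∈ U, ∀ v : E n, HasGradientAt (fun q' => L t q' v) (Lq t q v) q)
    (hLv : ∀ (t : ℝ), ∀ q ∈ U, ∀ v : E n, HasGradientAt (fun v' => L t q v') (Lv t q v) v)
    (hLvv : ∀ (t : ℝ), ∀ q ∈ U, ∀ v : E n, HasFDerivAt (fun v' => Lv t q v') (Lvv t q v) v)
    (hLqv : ∀ (t : ℝ), ∀ q ∈ U, ∀ v : E n, HasFDerivAt (fun q' => Lv t q' v) (Lqv t q v) q)
    (hLvq : ∀ (t : ℝ), ∀ q ∈ U, ∀ v : E n, HasFDerivAt (fun v' => Lq t q v') (Lvq t q v) v)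
    (hLqq : ∀ (t : ℝ), ∀ q ∈ U, ∀ v : E n, HasFDerivAt (fun q' => Lq t q' v) (Lqq t q v) q)
    (ℓ₁ : ℝ) (hℓ₁ : 0 < ℓ₁)
    (hL1 : ∀ t ∈ Set.Icc (0:ℝ) 1, ∀ q ∈ U, ∀ v : E n,
      ‖Lvv t q v‖ ≤ ℓ₁ ∧ ‖Lqv t q v‖ ≤ ℓ₁ * (1 + ‖v‖) ∧ ‖Lvq t q v‖ ≤ ℓ₁ * (1 + ‖v‖)
        ∧ ‖Lqq t q v‖ ≤ ℓ₁ * (1 + ‖v‖ ^ 2))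
    (ℓ₂ : ℝ) (hℓ₂ : 0 < ℓ₂)
    (hL2 : ∀ t ∈ Set.Icc (0:ℝ) 1, ∀ q ∈ U, ∀ v ξ : E n, ℓ₂ * ‖ξ‖ ^ 2 ≤ ⟪Lvv t q v ξ, ξ⟫)
    (W : Submodule ℝ (E n × E n)) (h0U : (0 : E n) ∈ U)
    (A : Hsp n → (↥(HWsub W) →L[ℝ] ↥(HWsub W)))
    (hA : ∀ γ ∈ actO U, ∀ ξ η : ↥(HWsub W),
      inn0 Lvv (A γ ξ : Hsp n) (η : Hsp n)
        = (∫ t, ⟪Lvv t (pathH γ t) (γ.2 t) ((ξ : Hsp n).2 t), (η : Hsp n).2 t⟫ ∂μ01)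
          + ∫ t, ⟪pathH (ξ : Hsp n) t, pathH (η : Hsp n) t⟫ ∂μ01)
    (γs : ℕ → Hsp n) (γ : Hsp n)
    (hγs : ∀ h, γs h ∈ actO U) (hγ : γ ∈ actO U)
    (hconv : Tendsto γs atTop (𝓝 γ)) :
    ∀ ξ : ↥(HWsub W), Tendsto (fun h => A (γs h) ξ) atTop (𝓝 (A γ ξ)) :=
  A_strong_convergence_general U hU L Lv Lvv Lqv Lvq Lqq hL hLv hLvv ℓ₁ hL1 ℓ₂ hℓ₂ hL2 W h0U A hA γs
    γ hγs hγ hconv
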